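/- arXiv:0901.4923 — 2 statements merged into one kernel-verified Lean document; each statement's English description precedes it below -/
import Mathlib

section
/- Let Γ be a simple graph with minimum degree δ that is partitionable into global defensive k-alliances. Then ψ_k^{gd}(Γ) ≤ ⌊(δ − k + 2)/2⌋. -/
open Finset

/-- The number of neighbors that the vertex `v` has inside the set `S`. -/
def degIn {V : Type*} [Fintype V] [DecidableEq V] (G : SimpleGraph V) [DecidableRel G.Adj]
    (S : Finset V) (v : V) : ℕ :=
  (S.filter fun u => G.Adj v u).card

/-- `S` is a defensive `k`-alliance: `S` is nonempty and every vertex of `S` has at least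
`k` more neighbors inside `S` than outside. -/
def IsDefensiveAlliance {V : Type*} [Fintype V] [DecidableEq V] (G : SimpleGraph V)
    [DecidableRel G.Adj] (k : ℤ) (S : Finset V) : Prop :=
  S.Nonempty ∧ ∀ v ∈ S, (degIn G Sᶜ v : ℤ) + k ≤ (degIn G S v : ℤ)

/-- `S` is a dominating set: every vertex outside `S` has a neighbor in `S`. -/
def IsDominatingSet {V : Type*} [Fintype V] [DecidableEq V] (G : SimpleGraph V)
    (S : Finset V) : Prop :=
  ∀ v ∉ S, ∃ u ∈ S, G.Adj v u

/-- A global defensive `k`-alliance is a defensive `k`-alliance which is a dominating set. -/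
def IsGlobalDefensiveAlliance {V : Type*} [Fintype V] [DecidableEq V] (G : SimpleGraph V)
    [DecidableRel G.Adj] (k : ℤ) (S : Finset V) : Prop :=
  IsDefensiveAlliance G k S ∧ IsDominatingSet G S

/-- The defensive `k`-alliance number: the minimum cardinality of a defensive `k`-alliance. -/
noncomputable def defAllianceNum {V : Type*} [Fintype V] [DecidableEq V] (G : SimpleGraph V)
    [DecidableRel G.Adj] (k : ℤ) : ℕ :=
  sInf {s : ℕ | ∃ S : Finset V, IsDefensiveAlliance G k S ∧ S.card = s}

/-- The global defensive `k`-alliance number. -/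
noncomputable def globalDefAllianceNum {V : Type*} [Fintype V] [DecidableEq V] (G : SimpleGraph V)
    [DecidableRel G.Adj] (k : ℤ) : ℕ :=
  sInf {s : ℕ | ∃ S : Finset V, IsGlobalDefensiveAlliance G k S ∧ S.card = s}

/-- A partition of the vertex set all whose parts are defensive `k`-alliances. -/
def IsDefAlliancePartition {V : Type*} [Fintype V] [DecidableEq V] (G : SimpleGraph V)
    [DecidableRel G.Adj] (k : ℤ) (P : Finpartition (univ : Finset V)) : Prop :=
  ∀ S ∈ P.parts, IsDefensiveAlliance G k S

/-- A partition of the vertex set all whose parts are global defensive `k`-alliances. -/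
def IsGlobalDefAlliancePartition {V : Type*} [Fintype V] [DecidableEq V] (G : SimpleGraph V)
    [DecidableRel G.Adj] (k : ℤ) (P : Finpartition (univ : Finset V)) : Prop :=
  ∀ S ∈ P.parts, IsGlobalDefensiveAlliance G k S

/-- The defensive `k`-alliance partition number `ψₖᵈ`. -/
noncomputable def defPartitionNum {V : Type*} [Fintype V] [DecidableEq V] (G : SimpleGraph V)
    [DecidableRel G.Adj] (k : ℤ) : ℕ :=
  sSup {r : ℕ | ∃ P : Finpartition (univ : Finset V),
    IsDefAlliancePartition G k P ∧ P.parts.card = r}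

/-- The global defensive `k`-alliance partition number `ψₖᵍᵈ`. -/
noncomputable def globalDefPartitionNum {V : Type*} [Fintype V] [DecidableEq V]
    (G : SimpleGraph V) [DecidableRel G.Adj] (k : ℤ) : ℕ :=
  sSup {r : ℕ | ∃ P : Finpartition (univ : Finset V),
    IsGlobalDefAlliancePartition G k P ∧ P.parts.card = r}

/-
Take an optimal partition into `r` global defensive `k`-alliances and a vertex `v` of minimum
degree `δ`, lying in the part `S`. Each of the other `r - 1` parts dominates `v`, so `v` has at
least `r - 1` neighbours outside `S`; since `S` is a defensive `k`-alliance, `v` has at least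
`r - 1 + k` neighbours inside `S`. Hence `δ ≥ 2 (r - 1) + k`.
-/

section

variable {V : Type*} [Fintype V] [DecidableEq V] (G : SimpleGraph V) [DecidableRel G.Adj]

theorem degIn_add_degIn_compl (S : Finset V) (v : V) :
    degIn G S v + degIn G Sᶜ v = G.degree v := by
  rw [degIn, degIn, ← card_union_of_disjoint (disjoint_filter_filter disjoint_compl_right),
    ← filter_union, union_compl, SimpleGraph.degree, SimpleGraph.neighborFinset_eq_filter]

variable {G}

theorem IsDefensiveAlliance.two_mul_degIn_compl_add_le_degree {k : ℤ} {S : Finset V}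
    (hS : IsDefensiveAlliance G k S) {v : V} (hv : v ∈ S) :
    2 * (degIn G Sᶜ v : ℤ) + k ≤ G.degree v := by
  have hsum : (degIn G S v : ℤ) + degIn G Sᶜ v = G.degree v := by
    exact_mod_cast degIn_add_degIn_compl G S v
  linarith [hS.2 v hv]

/-- Sending a neighbour of `v` outside `S` to its part hits every part other than `S`. -/
theorem card_parts_sub_one_le_degIn_compl (P : Finpartition (univ : Finset V))
    (hP : ∀ T ∈ P.parts, IsDominatingSet G T) {S : Finset V} (hS : S ∈ P.parts) {v : V}
    (hv : v ∈ S) : P.parts.card - 1 ≤ degIn G Sᶜ v := by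
  rw [← card_erase_of_mem hS, degIn]
  refine card_le_card_of_surjOn P.part fun T hT => ?_
  obtain ⟨hTS, hT⟩ := mem_erase.mp hT
  have hvT : v ∉ T := fun hvT => hTS (P.part_eq_of_mem hT hvT ▸ P.part_eq_of_mem hS hv)
  obtain ⟨u, huT, hvu⟩ := hP T hT v hvT
  have huS : u ∉ S := fun huS => hTS (P.part_eq_of_mem hT huT ▸ P.part_eq_of_mem hS huS)
  exact ⟨u, mem_filter.mpr ⟨mem_compl.mpr huS, hvu⟩, P.part_eq_of_mem hT huT⟩

theorem IsGlobalDefAlliancePartition.two_mul_card_parts_le {k : ℤ}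
    {P : Finpartition (univ : Finset V)} (hP : IsGlobalDefAlliancePartition G k P)
    (hne : P.parts.Nonempty) :
    2 * (P.parts.card : ℤ) ≤ G.minDegree - k + 2 := by
  obtain ⟨T, hT⟩ := hne
  have : Nonempty V := (P.nonempty_of_mem_parts hT).to_subtype.map Subtype.val
  obtain ⟨v, hv⟩ := G.exists_minimal_degree_vertex
  obtain ⟨S, hS, hvS⟩ := P.exists_mem (mem_univ v)
  have houtside : (P.parts.card : ℤ) - 1 ≤ degIn G Sᶜ v := by
    have := card_parts_sub_one_le_degIn_compl P (fun T hT => (hP T hT).2) hS hvS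
    omega
  have hdeg := (hP S hS).1.two_mul_degIn_compl_add_le_degree hvS
  rw [hv]
  linarith

theorem exists_isGlobalDefAlliancePartition_card_eq {k : ℤ}
    (hpos : 0 < globalDefPartitionNum G k) :
    ∃ P : Finpartition (univ : Finset V),
      IsGlobalDefAlliancePartition G k P ∧ P.parts.card = globalDefPartitionNum G k := by
  let sizes := {r : ℕ | ∃ P : Finpartition (univ : Finset V),
    IsGlobalDefAlliancePartition G k P ∧ P.parts.card = r}
  change 0 < sSup sizes at hpos
  suffices sSup sizes ∈ sizes from this
  refine Nat.sSup_mem (Set.nonempty_iff_ne_empty.mpr fun hempty => ?_) ⟨Fintype.card V, ?_⟩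
  · rw [hempty, csSup_empty] at hpos
    exact lt_irrefl 0 hpos
  · rintro r ⟨P, -, rfl⟩
    exact P.card_parts_le_card

end

/-- If `Γ` with minimum degree `δ` is partitionable into global defensive `k`-alliances, then
`ψₖᵍᵈ(Γ) ≤ ⌊(δ - k + 2)/2⌋`. -/
theorem statement2 {V : Type*} [Fintype V] [DecidableEq V]
    (G : SimpleGraph V) [DecidableRel G.Adj] (k : ℤ)
    (hpart : 2 ≤ globalDefPartitionNum G k) :
    (globalDefPartitionNum G k : ℤ) ≤ Int.fdiv ((G.minDegree : ℤ) - k + 2) 2 := by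
  obtain ⟨P, hP, hcard⟩ :=
    exists_isGlobalDefAlliancePartition_card_eq (G := G) (k := k) (by omega)
  have hne : P.parts.Nonempty := card_pos.mp (by omega)
  have hbound := hP.two_mul_card_parts_le hne
  rw [Int.fdiv_eq_ediv_of_nonneg _ (by norm_num), ← hcard]
  omega
end

section
/- Let Γ_1 and Γ_2 be simple graphs. If Γ_1 contains a defensive k_1-alliance and Γ_2 contains a defensive k_2-alliance, then the Cartesian product Γ_1×Γ_2 contains a defensive (k_1+k_2)-alliance, and a_{k_1+k_2}^d(Γ_1×Γ_2) ≤ a_{k_1}^d(Γ_1) · a_{k_2}^d(Γ_2). -/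
open Finset

instance {α β : Type*} [DecidableEq α] [DecidableEq β] (G : SimpleGraph α) (H : SimpleGraph β)
    [DecidableRel G.Adj] [DecidableRel H.Adj] : DecidableRel (G.boxProd H).Adj := fun _ _ =>
  decidable_of_iff' _ SimpleGraph.boxProd_adj

/-!
The neighbours of `(a, b)` in `G □ H` are the `G`-neighbours of `a` in the row of `b` together
with the `H`-neighbours of `b` in the column of `a`. For a product set `S₁ ×ˢ S₂` both its
degree and its complement's degree therefore add up, so a product of a `k₁`- and a
`k₂`-alliance is a `(k₁ + k₂)`-alliance; taking both factors of minimum size gives the bound.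
-/

open SimpleGraph Function

section Alliance

variable {V : Type*} [Fintype V] [DecidableEq V] {G : SimpleGraph V} [DecidableRel G.Adj]
  {k : ℤ}

theorem defAllianceNum_le_card {S : Finset V} (hS : IsDefensiveAlliance G k S) :
    defAllianceNum G k ≤ #S :=
  Nat.sInf_le ⟨S, hS, rfl⟩

theorem exists_isDefensiveAlliance_card_eq_defAllianceNum
    (h : ∃ S : Finset V, IsDefensiveAlliance G k S) :
    ∃ S : Finset V, IsDefensiveAlliance G k S ∧ #S = defAllianceNum G k := by
  obtain ⟨S, hS⟩ := h
  exact Nat.sInf_mem (s := {s | ∃ S : Finset V, IsDefensiveAlliance G k S ∧ #S = s})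
    ⟨#S, S, hS, rfl⟩

end Alliance

section BoxProd

variable {α β : Type*} [Fintype α] [Fintype β] [DecidableEq α] [DecidableEq β]
  {G : SimpleGraph α} {H : SimpleGraph β} [DecidableRel G.Adj] [DecidableRel H.Adj]

theorem degIn_boxProd (X : Finset (α × β)) (a : α) (b : β) :
    degIn (G □ H) X (a, b) =
      degIn G {x | (x, b) ∈ X} a + degIn H {y | (a, y) ∈ X} b := by
  have hsplit : X.filter ((G □ H).Adj (a, b)) =
      (({x | (x, b) ∈ X} : Finset α).filter (G.Adj a)).map (Embedding.sectL α b) ∪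
      (({y | (a, y) ∈ X} : Finset β).filter (H.Adj b)).map (Embedding.sectR a β) := by
    ext ⟨x, y⟩
    simp only [mem_filter, mem_union, mem_map, mem_univ, true_and, boxProd_adj,
      Embedding.sectL_apply, Embedding.sectR_apply, Prod.mk.injEq]
    constructor
    · rintro ⟨hX, ⟨hadj, rfl⟩ | ⟨hadj, rfl⟩⟩
      · exact Or.inl ⟨x, ⟨hX, hadj⟩, rfl, rfl⟩
      · exact Or.inr ⟨y, ⟨hX, hadj⟩, rfl, rfl⟩
    · rintro (⟨x, ⟨hX, hadj⟩, rfl, rfl⟩ | ⟨y, ⟨hX, hadj⟩, rfl, rfl⟩)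
      · exact ⟨hX, Or.inl ⟨hadj, rfl⟩⟩
      · exact ⟨hX, Or.inr ⟨hadj, rfl⟩⟩
  rw [degIn, hsplit, card_union_of_disjoint, card_map, card_map, degIn, degIn]
  simp only [Finset.disjoint_left, mem_map, mem_filter, Embedding.sectL_apply,
    Embedding.sectR_apply]
  rintro _ ⟨x, ⟨_, hadj⟩, rfl⟩ ⟨y, _, h⟩
  exact G.irrefl ((Prod.mk.inj h).1 ▸ hadj)

theorem IsDefensiveAlliance.product {k₁ k₂ : ℤ} {S₁ : Finset α} {S₂ : Finset β}
    (h₁ : IsDefensiveAlliance G k₁ S₁) (h₂ : IsDefensiveAlliance H k₂ S₂) :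
    IsDefensiveAlliance (G □ H) (k₁ + k₂) (S₁ ×ˢ S₂) := by
  refine ⟨h₁.1.product h₂.1, ?_⟩
  rintro ⟨a, b⟩ hab
  obtain ⟨ha, hb⟩ := mem_product.mp hab
  have hrow : ({x | (x, b) ∈ S₁ ×ˢ S₂} : Finset α) = S₁ ∧
      ({x | (x, b) ∈ (S₁ ×ˢ S₂)ᶜ} : Finset α) = S₁ᶜ := by
    constructor <;> ext <;> simp [hb]
  have hcol : ({y | (a, y) ∈ S₁ ×ˢ S₂} : Finset β) = S₂ ∧
      ({y | (a, y) ∈ (S₁ ×ˢ S₂)ᶜ} : Finset β) = S₂ᶜ := by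
    constructor <;> ext <;> simp [ha]
  rw [degIn_boxProd, degIn_boxProd, hrow.1, hrow.2, hcol.1, hcol.2]
  push_cast
  linarith [h₁.2 a ha, h₂.2 b hb]

end BoxProd

/-- If `Γᵢ` contains a defensive `kᵢ`-alliance, `i ∈ {1,2}`, then `Γ₁ × Γ₂` contains a
defensive `(k₁+k₂)`-alliance, and `a_{k₁+k₂}ᵈ(Γ₁×Γ₂) ≤ a_{k₁}ᵈ(Γ₁) a_{k₂}ᵈ(Γ₂)`. -/
theorem statement13 {α β : Type*} [Fintype α] [Fintype β] [DecidableEq α] [DecidableEq β]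
    (G : SimpleGraph α) (H : SimpleGraph β) [DecidableRel G.Adj] [DecidableRel H.Adj]
    (k₁ k₂ : ℤ)
    (h₁ : ∃ S : Finset α, IsDefensiveAlliance G k₁ S)
    (h₂ : ∃ S : Finset β, IsDefensiveAlliance H k₂ S) :
    (∃ X : Finset (α × β), IsDefensiveAlliance (G.boxProd H) (k₁ + k₂) X) ∧
      defAllianceNum (G.boxProd H) (k₁ + k₂) ≤ defAllianceNum G k₁ * defAllianceNum H k₂ := by
  obtain ⟨S₁, hS₁, hcard₁⟩ := exists_isDefensiveAlliance_card_eq_defAllianceNum h₁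
  obtain ⟨S₂, hS₂, hcard₂⟩ := exists_isDefensiveAlliance_card_eq_defAllianceNum h₂
  have hS := hS₁.product hS₂
  refine ⟨⟨_, hS⟩, ?_⟩
  calc defAllianceNum (G □ H) (k₁ + k₂) ≤ #(S₁ ×ˢ S₂) := defAllianceNum_le_card hS
    _ = defAllianceNum G k₁ * defAllianceNum H k₂ := by rw [card_product, hcard₁, hcard₂]
end
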